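/- Complexity Reduction for Partitions: if P contains no type-B edge and I(S_X) ∩ I(S_Z) = ∅, then the Shapley values of the quotient game ν^I(S) = h_P(r_{I⁻¹(S)}^z(x)) satisfy: φ_i = 0 if i ∉ I(S_X∪S_Z); φ_i = W(|I(S_X)|−1, |I(S_X∪S_Z)|)·v if i ∈ I(S_X); φ_i = −W(|I(S_X)|, |I(S_X∪S_Z)|)·v if i ∈ I(S_Z). -/
import Mathlib


open Finset

noncomputable def W (k n : ℕ) : ℝ :=
  (Nat.factorial k * Nat.factorial (n - k - 1) : ℝ) / (Nat.factorial n : ℝ)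

noncomputable def shapley {d : ℕ} (ν : Finset (Fin d) → ℝ) (i : Fin d) : ℝ :=
  ∑ S ∈ (Finset.univ.erase i).powerset, W S.card d * (ν (insert i S) - ν S)

/-- The replace function: coordinates in T come from x, others from the baseline z. -/
def replace {d' : ℕ} (x z : Fin d' → ℝ) (T : Finset (Fin d')) : Fin d' → ℝ :=
  fun i => if i ∈ T then x i else z i

/-- `R` is a Boolean threshold function on coordinate `i`. -/
def IsThreshold {d' : ℕ} (i : Fin d') (R : (Fin d' → ℝ) → ℝ) : Prop :=
  ∃ γ : ℝ, (∀ w, R w = if w i ≤ γ then 1 else 0) ∨ (∀ w, R w = if γ < w i then 1 else 0)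

/-- The decision stump associated with a maximal path. -/
def stump {d' : ℕ} {E : Type*} [Fintype E] (v : ℝ) (R : E → (Fin d' → ℝ) → ℝ)
    (w : Fin d' → ℝ) : ℝ :=
  v * ∏ e : E, R e w

/-- Feature indices of type-X edges: `R e x = 1` and `R e z = 0`. -/
noncomputable def SX {d' : ℕ} {E : Type*} [Fintype E] (idx : E → Fin d')
    (R : E → (Fin d' → ℝ) → ℝ) (x z : Fin d' → ℝ) : Finset (Fin d') :=
  (Finset.univ.filter (fun e => R e x = 1 ∧ R e z = 0)).image idx

/-- Feature indices of type-Z edges: `R e x = 0` and `R e z = 1`. -/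
noncomputable def SZ {d' : ℕ} {E : Type*} [Fintype E] (idx : E → Fin d')
    (R : E → (Fin d' → ℝ) → ℝ) (x z : Fin d' → ℝ) : Finset (Fin d') :=
  (Finset.univ.filter (fun e => R e x = 0 ∧ R e z = 1)).image idx

/-- The preimage of a coalition of groups under the indexing function I. -/
def preim {d' d : ℕ} (I : Fin d' → Fin d) (S : Finset (Fin d)) : Finset (Fin d') :=
  Finset.univ.filter (fun j => I j ∈ S)

lemma W_rec (c n : ℕ) (h : c < n) : W c n = W c (n+1) + W (c+1) (n+1) := by
  obtain ⟨b, rfl⟩ : ∃ b, n = c + b + 1 := ⟨n - c - 1, by omega⟩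
  unfold W
  have h1 : c + b + 1 - c - 1 = b := by omega
  have h2 : c + b + 1 + 1 - c - 1 = b + 1 := by omega
  have h3 : c + b + 1 + 1 - (c+1) - 1 = b := by omega
  rw [h1, h2, h3]
  have hc : (Nat.factorial (c+b+1) : ℝ) ≠ 0 := Nat.cast_ne_zero.2 (Nat.factorial_ne_zero _)
  have hc2 : (Nat.factorial (c+b+1+1) : ℝ) ≠ 0 := Nat.cast_ne_zero.2 (Nat.factorial_ne_zero _)
  rw [show c+b+1+1 = (c+b+1)+1 from rfl, Nat.factorial_succ (c+b+1), Nat.factorial_succ b,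
    Nat.factorial_succ c]
  push_cast
  field_simp
  ring

lemma sum_W (m c : ℕ) (h : c < m) : ∀ t, ∑ k ∈ Finset.range (t+1), ((t.choose k : ℝ)) * W (c+k) (m+t) = W c m := by
  intro t
  induction t with
  | zero => simp
  | succ t ih =>
    have key : ∀ k ∈ Finset.range (t+1), ((t.choose k : ℝ)) * W (c+k) (m+t) =
        (t.choose k : ℝ) * W (c+k) (m+t+1) + (t.choose k : ℝ) * W (c+k+1) (m+t+1) := by
      intro k hk
      rw [← mul_add, ← W_rec (c+k) (m+t) (by simp at hk; omega)]
    rw [Finset.sum_congr rfl key, Finset.sum_add_distrib] at ih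
    rw [← ih]
    have lhs_eq : ∑ k ∈ Finset.range (t+1+1), (((t+1).choose k : ℝ)) * W (c+k) (m+(t+1))
        = ∑ k ∈ Finset.range (t+1), (((t.choose k : ℝ) + (t.choose (k+1) : ℝ)) * W (c+k+1) (m+t+1)) + W c (m+t+1) := by
      rw [Finset.sum_range_succ']
      simp only [Nat.choose_succ_succ, Nat.cast_add, Nat.choose_zero_right, Nat.cast_one, one_mul,
        add_zero]
      rfl
    rw [lhs_eq]
    simp only [add_mul, Finset.sum_add_distrib]
    have e2 : (∑ k ∈ Finset.range (t+1), ((t.choose (k+1) : ℝ)) * W (c+k+1) (m+t+1)) + W c (m+t+1)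
        = ∑ k ∈ Finset.range (t+1), ((t.choose k : ℝ)) * W (c+k) (m+t+1) := by
      rw [Finset.sum_range_succ, Finset.sum_range_succ' (fun k => ((t.choose k : ℝ)) * W (c+k) (m+t+1)) t]
      simp [Nat.choose_succ_self]
      rfl
    linarith [e2]

lemma interval_sum {α : Type*} [DecidableEq α] (A N : Finset α) (hAN : A ⊆ N) (n : ℕ) :
    ∑ S ∈ N.powerset.filter (fun S => A ⊆ S), W S.card n
      = ∑ k ∈ Finset.range ((N.card - A.card)+1), (((N.card - A.card).choose k : ℝ)) * W (A.card + k) n := by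
  have step1 : ∑ S ∈ N.powerset.filter (fun S => A ⊆ S), W S.card n
      = ∑ T ∈ (N \ A).powerset, W (A.card + T.card) n := by
    apply Finset.sum_nbij' (fun S => S \ A) (fun T => A ∪ T)
    · intro S hS
      simp only [mem_filter, mem_powerset] at hS
      simp only [mem_powerset]
      exact sdiff_subset_sdiff hS.1 (le_refl A)
    · intro T hT
      simp only [mem_powerset] at hT
      simp only [mem_filter, mem_powerset]
      exact ⟨union_subset hAN (hT.trans sdiff_subset), subset_union_left⟩
    · intro S hS
      simp only [mem_filter, mem_powerset] at hS
      exact union_sdiff_of_subset hS.2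
    · intro T hT
      simp only [mem_powerset] at hT
      rw [union_sdiff_cancel_left]
      exact disjoint_of_subset_right hT sdiff_disjoint.symm
    · intro S hS
      simp only [mem_filter, mem_powerset] at hS
      rw [card_sdiff_of_subset hS.2, Nat.add_sub_cancel' (card_le_card hS.2)]
  rw [step1, Finset.sum_powerset ((N \ A)) (fun T => W (A.card + T.card) n)]
  rw [card_sdiff_of_subset hAN]
  apply Finset.sum_congr rfl
  intro k hk
  have : ∀ T ∈ Finset.powersetCard k (N \ A), W (A.card + T.card) n = W (A.card + k) n := by
    intro T hT
    rw [(Finset.mem_powersetCard.1 hT).2]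
  rw [Finset.sum_congr rfl this, Finset.sum_const, nsmul_eq_mul, Finset.card_powersetCard]
  rw [card_sdiff_of_subset hAN]

lemma interval_sum_W {α : Type*} [DecidableEq α] (A N : Finset α) (hAN : A ⊆ N) (dd mm : ℕ)
    (hc : A.card < mm) (hcard : N.card + mm = dd + A.card) :
    ∑ S ∈ N.powerset.filter (fun S => A ⊆ S), W S.card dd = W A.card mm := by
  have hA : A.card ≤ N.card := card_le_card hAN
  have hdd : dd = mm + (N.card - A.card) := by omega
  rw [interval_sum A N hAN dd]
  rw [hdd]
  exact sum_W mm A.card hc _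

lemma shapley_game {d : ℕ} (v : ℝ) (A B : Finset (Fin d)) (hdisj : Disjoint A B)
    (ν : Finset (Fin d) → ℝ)
    (hν : ∀ S, ν S = if (A ⊆ S ∧ Disjoint B S) then v else 0) (i : Fin d) :
    (i ∉ A ∪ B → shapley ν i = 0) ∧
    (i ∈ A → shapley ν i = W (A.card - 1) (A ∪ B).card * v) ∧
    (i ∈ B → shapley ν i = - W A.card (A ∪ B).card * v) := by
  have hm : (A ∪ B).card = A.card + B.card := card_union_of_disjoint hdisj
  have hmd : (A ∪ B).card ≤ d := le_trans (card_le_card (subset_univ _)) (by simp)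
  refine ⟨?_, ?_, ?_⟩
  · intro hi
    have hiA : i ∉ A := fun h => hi (mem_union_left _ h)
    have hiB : i ∉ B := fun h => hi (mem_union_right _ h)
    apply Finset.sum_eq_zero
    intro S _
    rw [hν, hν]
    have h2 : (A ⊆ insert i S) ↔ A ⊆ S := by
      rw [Finset.subset_insert_iff, Finset.erase_eq_of_notMem hiA]
    have h3 : Disjoint B (insert i S) ↔ Disjoint B S := by
      rw [Finset.disjoint_insert_right]; simp [hiB]
    rw [if_congr (and_congr h2 h3) rfl rfl, sub_self, mul_zero]
  · intro hi
    have hiB : i ∉ B := Finset.disjoint_left.1 hdisj hi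
    have ha1 : 1 ≤ A.card := Finset.card_pos.2 ⟨i, hi⟩
    have hterm : ∀ S ∈ (Finset.univ.erase i).powerset,
        W S.card d * (ν (insert i S) - ν S)
        = if (A.erase i ⊆ S ∧ Disjoint B S) then W S.card d * v else 0 := by
      intro S hS
      have hiS : i ∉ S := fun h => by
        have := Finset.mem_powerset.1 hS h
        exact (Finset.mem_erase.1 this).1 rfl
      rw [hν, hν]
      have h1 : ¬ (A ⊆ S ∧ Disjoint B S) := fun h => hiS (h.1 hi)
      have h2 : (A ⊆ insert i S) ↔ A.erase i ⊆ S := Finset.subset_insert_iff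
      have h3 : Disjoint B (insert i S) ↔ Disjoint B S := by
        rw [Finset.disjoint_insert_right]; simp [hiB]
      rw [if_neg h1, sub_zero, if_congr (and_congr h2 h3) rfl rfl, mul_ite, mul_zero]
    rw [shapley, Finset.sum_congr rfl hterm, ← Finset.sum_filter]
    have hset : (Finset.univ.erase i).powerset.filter (fun S => A.erase i ⊆ S ∧ Disjoint B S)
        = ((Finset.univ.erase i) \ B).powerset.filter (fun S => A.erase i ⊆ S) := by
      ext S
      simp only [Finset.mem_filter, Finset.mem_powerset, Finset.subset_sdiff]
      constructor
      · rintro ⟨h1, h2, h3⟩; exact ⟨⟨h1, h3.symm⟩, h2⟩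
      · rintro ⟨⟨h1, h3⟩, h2⟩; exact ⟨h1, h2, h3.symm⟩
    rw [hset, ← Finset.sum_mul]
    have hBe : B ⊆ Finset.univ.erase i := fun x hx =>
      Finset.mem_erase.2 ⟨fun h => hiB (h ▸ hx), Finset.mem_univ x⟩
    have hNcard : ((Finset.univ.erase i) \ B).card = (d - 1) - B.card := by
      rw [Finset.card_sdiff_of_subset hBe, Finset.card_erase_of_mem (Finset.mem_univ i)]
      simp
    have hAN : A.erase i ⊆ (Finset.univ.erase i) \ B := by
      rw [Finset.subset_sdiff]
      exact ⟨Finset.erase_subset_erase i (subset_univ A),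
        Finset.disjoint_of_subset_left (Finset.erase_subset i A) hdisj⟩
    have hb : B.card ≤ d - 1 := by
      have := Finset.card_le_card hBe
      rwa [Finset.card_erase_of_mem (Finset.mem_univ i), Finset.card_univ, Fintype.card_fin] at this
    rw [interval_sum_W (A.erase i) _ hAN d (A ∪ B).card
      (by rw [Finset.card_erase_of_mem hi]; omega)
      (by rw [Finset.card_erase_of_mem hi, hNcard]; omega)]
    rw [Finset.card_erase_of_mem hi]
  · intro hi
    have hiA : i ∉ A := fun h => Finset.disjoint_left.1 hdisj h hi
    have hb1 : 1 ≤ B.card := Finset.card_pos.2 ⟨i, hi⟩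
    have hterm : ∀ S ∈ (Finset.univ.erase i).powerset,
        W S.card d * (ν (insert i S) - ν S)
        = -(if (A ⊆ S ∧ Disjoint B S) then W S.card d * v else 0) := by
      intro S _
      rw [hν, hν]
      have h1 : ¬ (A ⊆ insert i S ∧ Disjoint B (insert i S)) := fun h =>
        Finset.disjoint_left.1 h.2 hi (Finset.mem_insert_self i S)
      rw [if_neg h1, zero_sub, mul_neg, mul_ite, mul_zero]
    rw [shapley, Finset.sum_congr rfl hterm, Finset.sum_neg_distrib, ← Finset.sum_filter]
    have hset : (Finset.univ.erase i).powerset.filter (fun S => A ⊆ S ∧ Disjoint B S)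
        = (Finset.univ \ B).powerset.filter (fun S => A ⊆ S) := by
      ext S
      simp only [Finset.mem_filter, Finset.mem_powerset, Finset.subset_sdiff]
      constructor
      · rintro ⟨h1, h2, h3⟩; exact ⟨⟨subset_univ S, h3.symm⟩, h2⟩
      · rintro ⟨⟨_, h3⟩, h2⟩
        refine ⟨fun x hx => Finset.mem_erase.2 ⟨fun h => ?_, Finset.mem_univ x⟩, h2, h3.symm⟩
        exact Finset.disjoint_left.1 h3 hx (h ▸ hi)
    rw [hset, ← Finset.sum_mul]
    have hAN : A ⊆ Finset.univ \ B := Finset.subset_sdiff.2 ⟨subset_univ A, hdisj⟩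
    have hNcard : (Finset.univ \ B).card = d - B.card := by
      rw [Finset.card_sdiff_of_subset (subset_univ B)]; simp
    have hbd : B.card ≤ d := by
      have := Finset.card_le_card (subset_univ B)
      simpa using this
    rw [interval_sum_W A _ hAN d (A ∪ B).card (by omega) (by omega)]
    ring

lemma nu_eq {d' d : ℕ} {E : Type*} [Fintype E]
    (v : ℝ) (idx : E → Fin d') (R : E → (Fin d' → ℝ) → ℝ)
    (hR : ∀ e, IsThreshold (idx e) (R e)) (x z : Fin d' → ℝ)
    (I : Fin d' → Fin d)
    (hnoB : ∀ e, ¬ (R e x = 0 ∧ R e z = 0)) (S : Finset (Fin d)) :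
    stump v R (replace x z (preim I S)) =
      if ((SX idx R x z).image I ⊆ S ∧ Disjoint ((SZ idx R x z).image I) S) then v else 0 := by
  have h01 : ∀ e (w : Fin d' → ℝ), R e w = 0 ∨ R e w = 1 := by
    intro e w
    obtain ⟨γ, hγ | hγ⟩ := hR e <;> rw [hγ w] <;> split <;> simp
  have hrep : ∀ e, R e (replace x z (preim I S)) = if I (idx e) ∈ S then R e x else R e z := by
    intro e
    have hmem : (idx e ∈ preim I S) = (I (idx e) ∈ S) := by
      simp [preim]
    have hco : replace x z (preim I S) (idx e) = if I (idx e) ∈ S then x (idx e) else z (idx e) := by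
      simp only [replace, hmem]
    obtain ⟨γ, hγ | hγ⟩ := hR e <;>
      · rw [hγ, hγ x, hγ z, hco]
        by_cases h : I (idx e) ∈ S <;> simp [h]
  by_cases hcond : (SX idx R x z).image I ⊆ S ∧ Disjoint ((SZ idx R x z).image I) S
  · rw [if_pos hcond]
    unfold stump
    rw [Finset.prod_eq_one, mul_one]
    intro e _
    rw [hrep e]
    by_cases h : I (idx e) ∈ S
    · rw [if_pos h]
      rcases h01 e x with hx | hx
      · exfalso
        have hz : R e z = 1 := (h01 e z).resolve_left fun hz => hnoB e ⟨hx, hz⟩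
        have : I (idx e) ∈ (SZ idx R x z).image I := by
          apply Finset.mem_image_of_mem
          exact Finset.mem_image_of_mem idx (by simp [hx, hz])
        exact (Finset.disjoint_left.1 hcond.2) this h
      · exact hx
    · rw [if_neg h]
      rcases h01 e z with hz | hz
      · exfalso
        have hx : R e x = 1 := (h01 e x).resolve_left fun hx => hnoB e ⟨hx, hz⟩
        have : I (idx e) ∈ (SX idx R x z).image I := by
          apply Finset.mem_image_of_mem
          exact Finset.mem_image_of_mem idx (by simp [hx, hz])
        exact h (hcond.1 this)
      · exact hz
  · rw [if_neg hcond]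
    unfold stump
    rw [not_and_or] at hcond
    have : ∃ e : E, R e (replace x z (preim I S)) = 0 := by
      rcases hcond with hc | hc
      · rw [Finset.not_subset] at hc
        obtain ⟨i0, hi0, hi0S⟩ := hc
        rw [Finset.mem_image] at hi0
        obtain ⟨j, hj, rfl⟩ := hi0
        rw [SX, Finset.mem_image] at hj
        obtain ⟨e, he, rfl⟩ := hj
        simp only [Finset.mem_filter, Finset.mem_univ, true_and] at he
        exact ⟨e, by rw [hrep e, if_neg hi0S]; exact he.2⟩
      · rw [Finset.not_disjoint_iff] at hc
        obtain ⟨i0, hi0, hi0S⟩ := hc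
        rw [Finset.mem_image] at hi0
        obtain ⟨j, hj, rfl⟩ := hi0
        rw [SZ, Finset.mem_image] at hj
        obtain ⟨e, he, rfl⟩ := hj
        simp only [Finset.mem_filter, Finset.mem_univ, true_and] at he
        exact ⟨e, by rw [hrep e, if_pos hi0S]; exact he.1⟩
    obtain ⟨e, he⟩ := this
    rw [Finset.prod_eq_zero (Finset.mem_univ e) he, mul_zero]

/-- Complexity Reduction for Partition-TreeSHAP: Shapley values of the quotient
game ν^I(S) = h_P(r_{I⁻¹(S)}^z(x)). -/
theorem partition_treeshap_complexity_reduction {d' d : ℕ} {E : Type*} [Fintype E]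
    (v : ℝ) (idx : E → Fin d') (R : E → (Fin d' → ℝ) → ℝ)
    (hR : ∀ e, IsThreshold (idx e) (R e)) (x z : Fin d' → ℝ)
    (I : Fin d' → Fin d)
    (hnoB : ∀ e, ¬ (R e x = 0 ∧ R e z = 0))
    (hdisj : Disjoint ((SX idx R x z).image I) ((SZ idx R x z).image I)) :
    let νI : Finset (Fin d) → ℝ := fun S => stump v R (replace x z (preim I S))
    let IX := (SX idx R x z).image I
    let IZ := (SZ idx R x z).image I
    let IXZ := ((SX idx R x z ∪ SZ idx R x z)).image I
    ∀ i : Fin d,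
      (i ∉ IXZ → shapley νI i = 0) ∧
      (i ∈ IX → shapley νI i = W (IX.card - 1) IXZ.card * v) ∧
      (i ∈ IZ → shapley νI i = - W IX.card IXZ.card * v) := by
  intro νI IX IZ IXZ i
  have hν : ∀ S, νI S = if (IX ⊆ S ∧ Disjoint IZ S) then v else 0 :=
    fun S => nu_eq v idx R hR x z I hnoB S
  have hIXZ : IXZ = IX ∪ IZ := Finset.image_union ..
  rw [hIXZ]
  exact shapley_game v IX IZ hdisj νI hν i
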